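/- arXiv:2005.11927 — 2 statements merged into one kernel-verified Lean document; each statement's English description precedes it below -/
import Mathlib

section
/- Define α_k for k ≥ 1 by α_1 = α_2 = 1, and for k ≥ 3, α_k = F_{k-2} + ∑_{i=1}^{⌊(k-1)/2⌋'} F_{2i-1} F_{k-2i} + ∑_{i} F_{2i} F_{k-(2i+1)} + F_{k-1}, where for odd k the first sum runs over 1 ≤ i ≤ (k-1)/2 and the second over 1 ≤ i ≤ (k-3)/2, and for even k both sums run over 1 ≤ i ≤ (k-2)/2. Then for all k ≥ 1, α_k ≤ α_{k+1}. -/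
/-- The absolute column sums of `C₁⁻²` from the paper. -/
def alpha (k : ℕ) : ℕ :=
  if k ≤ 2 then 1
  else
    Nat.fib (k - 2) +
      (if Odd k then
          ∑ i ∈ Finset.Icc 1 ((k - 1) / 2), Nat.fib (2 * i - 1) * Nat.fib (k - 2 * i) +
            ∑ i ∈ Finset.Icc 1 ((k - 3) / 2), Nat.fib (2 * i) * Nat.fib (k - (2 * i + 1))
        else
          ∑ i ∈ Finset.Icc 1 ((k - 2) / 2), Nat.fib (2 * i - 1) * Nat.fib (k - 2 * i) +
            ∑ i ∈ Finset.Icc 1 ((k - 2) / 2), Nat.fib (2 * i) * Nat.fib (k - (2 * i + 1))) +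
      Nat.fib (k - 1)

/-! Each summand of `alpha k` grows with `k`, and so does the range of each sum; the only
obstacle is the parity split in the definition, which disappears once the upper limits are
written as `(k - 1) / 2` and `(k - 2) / 2`. -/

open Finset

theorem monotone_sum_Icc {M : Type*} [AddCommMonoid M] [PartialOrder M]
    [IsOrderedAddMonoid M] [CanonicallyOrderedAdd M] {a : ℕ} {b : ℕ → ℕ} {f : ℕ → ℕ → M}
    (hb : Monotone b) (hf : ∀ i, Monotone (f i)) :
    Monotone fun k => ∑ i ∈ Icc a (b k), f i k := fun _ _ hkl =>
  (sum_le_sum_of_subset (Icc_subset_Icc le_rfl (hb hkl))).trans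
    (sum_le_sum fun i _ => hf i hkl)

/-- `alpha k` with the parity cases merged: for odd `k`, `(k - 3) / 2 = (k - 2) / 2`, and for
even `k`, `(k - 2) / 2 = (k - 1) / 2`. -/
def alphaSum (k : ℕ) : ℕ :=
  Nat.fib (k - 2) +
    (∑ i ∈ Icc 1 ((k - 1) / 2), Nat.fib (2 * i - 1) * Nat.fib (k - 2 * i) +
      ∑ i ∈ Icc 1 ((k - 2) / 2), Nat.fib (2 * i) * Nat.fib (k - (2 * i + 1))) +
    Nat.fib (k - 1)

theorem alpha_eq_alphaSum {k : ℕ} (hk : 2 ≤ k) : alpha k = alphaSum k := by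
  rcases hk.eq_or_lt with rfl | hk
  · rfl
  rw [alpha, if_neg (by omega), alphaSum]
  split_ifs with hodd
  · obtain ⟨m, rfl⟩ := hodd
    rw [show (2 * m + 1 - 3) / 2 = (2 * m + 1 - 2) / 2 by omega]
  · obtain ⟨m, rfl⟩ := Nat.not_odd_iff_even.mp hodd
    rw [show (m + m - 2) / 2 = (m + m - 1) / 2 by omega]

theorem monotone_alphaSum : Monotone alphaSum := by
  have hfib {c : ℕ} : Monotone fun k => Nat.fib (k - c) :=
    Nat.fib_mono.comp fun _ _ h => Nat.sub_le_sub_right h c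
  have hdiv {c : ℕ} : Monotone fun k => (k - c) / 2 :=
    fun _ _ h => Nat.div_le_div_right (Nat.sub_le_sub_right h c)
  refine (hfib.add ((monotone_sum_Icc hdiv fun i => ?_).add
    (monotone_sum_Icc hdiv fun i => ?_))).add hfib <;>
  exact fun _ _ h => Nat.mul_le_mul_left _ (hfib h)

theorem alpha_monotone_general (k : ℕ) : alpha k ≤ alpha (k + 1) := by
  rcases lt_or_ge k 2 with hk | hk
  · interval_cases k <;> decide
  · rw [alpha_eq_alphaSum hk, alpha_eq_alphaSum (by omega)]
    exact monotone_alphaSum k.le_succ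

theorem alpha_monotone (k : ℕ) (hk : 1 ≤ k) : alpha k ≤ alpha (k + 1) :=
  alpha_monotone_general k
end

section
/- The sum of all entries of the group inverse of the 6×6 matrix A with rows (1,0,1,1,0,0), (0,1,1,1,0,0), (0,0,1,0,1,1), (0,0,0,1,1,1), (0,0,0,0,0,0), (0,0,0,0,0,0) equals -12. -/
/-!
The matrix has the block form `A = [[B, C], [0, 0]]` with `B` an invertible `4 × 4` block, and a
matrix of this form has the group inverse `[[B⁻¹, B⁻² C], [0, 0]]`. Group inverses are unique in any
semigroup, so it suffices to check that this explicit matrix satisfies the three defining equations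
and to add up its entries. All entries are integers, so these checks are done by evaluation over
`ℤ` and transported to `ℚ` along the cast.
-/

structure IsGroupInverse {S : Type*} [Mul S] (a x : S) : Prop where
  mul_inv_mul : a * x * a = a
  inv_mul_inv : x * a * x = x
  comm : a * x = x * a

namespace IsGroupInverse

theorem map {S T F : Type*} [Mul S] [Mul T] [FunLike F S T] [MulHomClass F S T] (f : F)
    {a x : S} (h : IsGroupInverse a x) : IsGroupInverse (f a) (f x) where
  mul_inv_mul := by rw [← map_mul, ← map_mul, h.mul_inv_mul]
  inv_mul_inv := by rw [← map_mul, ← map_mul, h.inv_mul_inv]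
  comm := by rw [← map_mul, ← map_mul, h.comm]

variable {S : Type*} [Semigroup S] {a x y : S}

theorem mul_eq_mul (hx : IsGroupInverse a x) (hy : IsGroupInverse a y) :
    a * x = a * y :=
  calc a * x = a * y * a * x := by rw [hy.mul_inv_mul]
    _ = y * (a * x * a) := by rw [hy.comm]; simp only [mul_assoc]; rw [hx.comm]
    _ = a * y := by rw [hx.mul_inv_mul, hy.comm]

theorem unique (hx : IsGroupInverse a x) (hy : IsGroupInverse a y) : x = y :=
  have hxy := hx.mul_eq_mul hy
  calc x = x * (a * x) := by rw [← mul_assoc, hx.inv_mul_inv]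
    _ = x * (a * y) := by rw [hxy]
    _ = a * x * y := by rw [← mul_assoc, hx.comm]
    _ = y := by rw [hxy, hy.comm, hy.inv_mul_inv]

end IsGroupInverse

def exampleMatrix : Matrix (Fin 6) (Fin 6) ℤ :=
  !![1,0,1,1,0,0; 0,1,1,1,0,0; 0,0,1,0,1,1; 0,0,0,1,1,1; 0,0,0,0,0,0; 0,0,0,0,0,0]

def exampleGroupInverse : Matrix (Fin 6) (Fin 6) ℤ :=
  !![1,0,-1,-1,-4,-4; 0,1,-1,-1,-4,-4; 0,0,1,0,1,1; 0,0,0,1,1,1; 0,0,0,0,0,0; 0,0,0,0,0,0]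

theorem isGroupInverse_exampleGroupInverse :
    IsGroupInverse exampleMatrix exampleGroupInverse :=
  ⟨by decide, by decide, by decide⟩

theorem sum_exampleGroupInverse : ∑ i, ∑ j, exampleGroupInverse i j = -12 := by decide

theorem sum_group_inverse_example :
    let A : Matrix (Fin 6) (Fin 6) ℚ :=
      !![1,0,1,1,0,0; 0,1,1,1,0,0; 0,0,1,0,1,1; 0,0,0,1,1,1; 0,0,0,0,0,0; 0,0,0,0,0,0]
    ∀ X : Matrix (Fin 6) (Fin 6) ℚ,
      A * X * A = A → X * A * X = X → A * X = X * A →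
        ∑ i, ∑ j, X i j = -12 := by
  intro A X h₁ h₂ h₃
  have hA : (Int.castRingHom ℚ).mapMatrix exampleMatrix = A := by
    ext i j; fin_cases i <;> fin_cases j <;> rfl
  have hX : X = (Int.castRingHom ℚ).mapMatrix exampleGroupInverse :=
    IsGroupInverse.unique ⟨h₁, h₂, h₃⟩
      (hA ▸ isGroupInverse_exampleGroupInverse.map (Int.castRingHom ℚ).mapMatrix)
  rw [hX]
  simpa using congrArg (Int.cast : ℤ → ℚ) sum_exampleGroupInverse
end
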